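/- The characteristic set of the Heisenberg vector fields, M = {(x₁, x₂, x₃, 0, −x₁ p₃, p₃) : x ∈ ℝ³, p₃ ≠ 0} ⊂ ℝ³ × ℝ³, is a symplectic submanifold of T*ℝ³: it is a smooth 4-dimensional submanifold and the restriction of the canonical symplectic form σ = Σₖ dpₖ ∧ dxₖ to each tangent space of M is nondegenerate. -/

import Mathlib

/-- The canonical symplectic form on ℝ³ × ℝ³ ≅ T*ℝ³,
`σ((ξ,η),(ξ',η')) = ⟨η, ξ'⟩ − ⟨η', ξ⟩`. -/
def sympForm (v w : (Fin 3 → ℝ) × (Fin 3 → ℝ)) : ℝ :=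
  (∑ k, v.2 k * w.1 k) - (∑ k, w.2 k * v.1 k)

/-- Global parametrization of the characteristic set of the Heisenberg
vector fields: `Φ(x, t) = (x, (0, −x₁ t, t))`. -/
def heisChart (q : (Fin 3 → ℝ) × ℝ) : (Fin 3 → ℝ) × (Fin 3 → ℝ) :=
  (q.1, ![0, -(q.1 0) * q.2, q.2])

noncomputable def heisDeriv (q : (Fin 3 → ℝ) × ℝ) :
    ((Fin 3 → ℝ) × ℝ) →L[ℝ] ((Fin 3 → ℝ) × (Fin 3 → ℝ)) :=
  (ContinuousLinearMap.fst ℝ (Fin 3 → ℝ) ℝ).prod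
    (ContinuousLinearMap.pi ![0,
      (-((q.1 0) • (ContinuousLinearMap.snd ℝ (Fin 3 → ℝ) ℝ)
        + q.2 • ((ContinuousLinearMap.proj 0 : (Fin 3 → ℝ) →L[ℝ] ℝ).comp
          (ContinuousLinearMap.fst ℝ (Fin 3 → ℝ) ℝ)))),
      (ContinuousLinearMap.snd ℝ (Fin 3 → ℝ) ℝ)])

lemma heisDeriv_apply (q v : (Fin 3 → ℝ) × ℝ) :
    heisDeriv q v = (v.1, ![0, -(v.1 0 * q.2 + q.1 0 * v.2), v.2]) := by
  refine Prod.ext rfl ?_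
  funext i
  fin_cases i <;>
    · simp [heisDeriv, ContinuousLinearMap.pi_apply]
      try ring

lemma hasFDeriv (q : (Fin 3 → ℝ) × ℝ) : HasFDerivAt heisChart (heisDeriv q) q := by
  have h0 : HasFDerivAt (fun p : (Fin 3 → ℝ) × ℝ => p.1 0)
      ((ContinuousLinearMap.proj 0 : (Fin 3 → ℝ) →L[ℝ] ℝ).comp
        (ContinuousLinearMap.fst ℝ (Fin 3 → ℝ) ℝ)) q :=
    (((ContinuousLinearMap.proj 0 : (Fin 3 → ℝ) →L[ℝ] ℝ).comp
        (ContinuousLinearMap.fst ℝ (Fin 3 → ℝ) ℝ))).hasFDerivAt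
  have h2 : HasFDerivAt (fun p : (Fin 3 → ℝ) × ℝ => p.2)
      (ContinuousLinearMap.snd ℝ (Fin 3 → ℝ) ℝ) q :=
    (ContinuousLinearMap.snd ℝ (Fin 3 → ℝ) ℝ).hasFDerivAt
  have hb := (h0.mul h2).neg
  have hpi : HasFDerivAt (fun p : (Fin 3 → ℝ) × ℝ => (![0, -(p.1 0 * p.2), p.2] : Fin 3 → ℝ))
      (ContinuousLinearMap.pi ![0,
        (-((q.1 0) • (ContinuousLinearMap.snd ℝ (Fin 3 → ℝ) ℝ)
          + q.2 • ((ContinuousLinearMap.proj 0 : (Fin 3 → ℝ) →L[ℝ] ℝ).comp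
            (ContinuousLinearMap.fst ℝ (Fin 3 → ℝ) ℝ)))),
        (ContinuousLinearMap.snd ℝ (Fin 3 → ℝ) ℝ)]) q := by
    apply hasFDerivAt_pi''
    intro i
    fin_cases i <;> simp [ContinuousLinearMap.proj_pi]
    · exact hasFDerivAt_const 0 q
    · convert hb using 1
      · funext x; simp
      · abel
    · exact h2
  have h := HasFDerivAt.prodMk ((ContinuousLinearMap.fst ℝ (Fin 3 → ℝ) ℝ).hasFDerivAt) hpi
  have hfun : heisChart = fun x : (Fin 3 → ℝ) × ℝ =>
      (x.1, (![0, -(x.1 0 * x.2), x.2] : Fin 3 → ℝ)) := by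
    funext x; simp [heisChart, neg_mul]
  rw [hfun]
  exact h

lemma symp_eval (q a b : (Fin 3 → ℝ) × ℝ) :
    sympForm (heisDeriv q a) (heisDeriv q b) =
      -(a.1 0 * q.2 + q.1 0 * a.2) * b.1 1 + a.2 * b.1 2
      + (b.1 0 * q.2 + q.1 0 * b.2) * a.1 1 - b.2 * a.1 2 := by
  simp [sympForm, heisDeriv_apply, Fin.sum_univ_three]
  ring

/-- the characteristic set of the Heisenberg vector fields,
`M = {(x, 0, −x₁p₃, p₃) : p₃ ≠ 0}`, is a smooth 4-dimensional submanifold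
(the image of the smooth injective immersion `heisChart` over `{p₃ ≠ 0}`)
on which the canonical symplectic form is nondegenerate. -/
theorem stmt_9 :
    ({q : (Fin 3 → ℝ) × (Fin 3 → ℝ) |
        q.2 0 = 0 ∧ q.2 1 = -(q.1 0) * q.2 2 ∧ q.2 2 ≠ 0}
      = heisChart '' {q : (Fin 3 → ℝ) × ℝ | q.2 ≠ 0}) ∧
    ContDiff ℝ (⊤ : ℕ∞) heisChart ∧ Function.Injective heisChart ∧
    (∀ q : (Fin 3 → ℝ) × ℝ, q.2 ≠ 0 →
      Function.Injective (fderiv ℝ heisChart q) ∧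
      ∀ v ∈ Set.range (fderiv ℝ heisChart q),
        (∀ w ∈ Set.range (fderiv ℝ heisChart q), sympForm v w = 0) → v = 0) := by
  refine ⟨?_, ?_, ?_, ?_⟩
  · ext q
    constructor
    · rintro ⟨h0, h1, h2⟩
      refine ⟨(q.1, q.2 2), h2, ?_⟩
      refine Prod.ext rfl ?_
      funext i
      fin_cases i <;> simp [heisChart, h0, h1]
    · rintro ⟨p, hp, rfl⟩
      exact ⟨rfl, rfl, hp⟩
  · refine ContDiff.prodMk contDiff_fst ?_
    refine contDiff_pi.mpr fun i => ?_
    fin_cases i <;> simp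
    · exact contDiff_const
    · fun_prop
    · exact contDiff_snd
  · intro a b h
    have h1 : a.1 = b.1 := congrArg (fun p : (Fin 3 → ℝ) × (Fin 3 → ℝ) => p.1) h
    have h2 : a.2 = b.2 := by
      have := congrArg (fun p => p.2 2) h
      simpa [heisChart] using this
    exact Prod.ext h1 h2
  · intro q hq
    have hfd : fderiv ℝ heisChart q = heisDeriv q := (hasFDeriv q).fderiv
    rw [hfd]
    constructor
    · intro a b h
      have h1 : a.1 = b.1 := by
        have := congrArg (fun p : (Fin 3 → ℝ) × (Fin 3 → ℝ) => p.1) h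
        simpa [heisDeriv_apply] using this
      have h2 : a.2 = b.2 := by
        have := congrArg (fun p => p.2 2) h
        simpa [heisDeriv_apply] using this
      exact Prod.ext h1 h2
    · rintro v ⟨a, rfl⟩ H
      have t1 : q.2 * a.1 1 = 0 := by
        have := H (heisDeriv q (![1, 0, 0], 0)) ⟨_, rfl⟩
        rw [symp_eval] at this
        simpa using this
      have ha1 : a.1 1 = 0 := by
        rcases mul_eq_zero.mp t1 with h | h
        · exact absurd h hq
        · exact h
      have ha2 : a.2 = 0 := by
        have := H (heisDeriv q (![0, 0, 1], 0)) ⟨_, rfl⟩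
        rw [symp_eval] at this
        simpa [ha1] using this
      have ha12 : a.1 2 = 0 := by
        have := H (heisDeriv q (0, 1)) ⟨_, rfl⟩
        rw [symp_eval] at this
        simpa [ha1] using this
      have ha0 : a.1 0 = 0 := by
        have := H (heisDeriv q (![0, 1, 0], 0)) ⟨_, rfl⟩
        rw [symp_eval] at this
        have : a.1 0 * q.2 = 0 := by simpa [ha1, ha2] using this
        rcases mul_eq_zero.mp this with h | h
        · exact h
        · exact absurd h hq
      have hfun : a.1 = 0 := by
        funext i; fin_cases i <;> simpa [ha0, ha1, ha12]
      rw [heisDeriv_apply, hfun, ha2]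
      refine Prod.ext rfl ?_
      funext i
      fin_cases i <;> simp
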